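/- arXiv:1709.04809 — 3 statements merged into one kernel-verified Lean document; each statement's English description precedes it below -/
import Mathlib

section
/- The clause F1 is satisfiable together with the CHC encoding of programs P1 and P2; semantically: for all integers a, b, x, y, x1, y1, x2, y2, if s11(a,b,x,y,x1,y1) and s21(a,b,x,y,x2,y2) both hold, then it is not the case that x1 ≤ x2 - 1, i.e., x1 ≥ x2. -/
/-- CHC encoding of the loop of program P1. -/
inductive s12 : ℤ → ℤ → ℤ → ℤ → ℤ → ℤ → ℤ → ℤ → Prop
  | base (a b x y : ℤ) (h : a ≥ b) : s12 a b x y a b x y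
  | step (a b x y a2 b2 x2 y2 : ℤ) (h : a ≤ b - 1)
      (ih : s12 (a + 1) b (x + a) (y + x + a) a2 b2 x2 y2) :
      s12 a b x y a2 b2 x2 y2

/-- CHC encoding of the loop of program P2. -/
inductive s23 : ℤ → ℤ → ℤ → ℤ → ℤ → ℤ → ℤ → ℤ → Prop
  | base (a b x y : ℤ) (h : a ≥ b - 1) : s23 a b x y (a + 1) b x (y + x)
  | step (a b x y a2 b2 x2 y2 : ℤ) (h : a ≤ b - 2)
      (ih : s23 (a + 1) b (x + a + 1) (y + x) a2 b2 x2 y2) :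
      s23 a b x y a2 b2 x2 y2

/-- CHC encoding of the body of program P2. -/
def s22 (a b x y a2 b2 x2 y2 : ℤ) : Prop :=
  (a ≥ b ∧ a2 = a ∧ b2 = b ∧ x2 = x ∧ y2 = y) ∨
  (a ≤ b - 1 ∧ s23 a b (x + a) y a2 b2 x2 y2)

/-- Input/output relation of program P1. -/
def s11 (a b x y x2 y2 : ℤ) : Prop := ∃ a2 b2, s12 a b x y a2 b2 x2 y2

/-- Input/output relation of program P2. -/
def s21 (a b x y x2 y2 : ℤ) : Prop := ∃ a2 b2, s22 a b x y a2 b2 x2 y2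

/-!
Both programs leave `x` increased by `a + (a + 1) + ⋯ + (b - 1)`: P1 adds these terms one per
iteration, while the pipelined P2 adds `a` in its prologue and `a + 1, …, b - 1` in its loop.
So the two final values of `x` coincide.
-/

open Finset

lemma Int.sum_Ico_eq_add_sum_Ico_add_one {M : Type*} [AddCommMonoid M] (f : ℤ → M) {a b : ℤ}
    (h : a < b) : ∑ i ∈ Ico a b, f i = f a + ∑ i ∈ Ico (a + 1) b, f i := by
  rw [← insert_Ico_add_one_left_eq_Ico h, sum_insert (by simp)]

lemma s12.x_eq {a b x y a2 b2 x2 y2 : ℤ} (h : s12 a b x y a2 b2 x2 y2) :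
    x2 = x + ∑ i ∈ Ico a b, i := by
  induction h with
  | base a b x y h => simp [Ico_eq_empty_of_le h]
  | step a b x y a2 b2 x2 y2 h _ ih =>
    rw [ih, Int.sum_Ico_eq_add_sum_Ico_add_one (fun i ↦ i) (show a < b by omega)]
    ring

lemma s23.x_eq {a b x y a2 b2 x2 y2 : ℤ} (h : s23 a b x y a2 b2 x2 y2) :
    x2 = x + ∑ i ∈ Ico (a + 1) b, i := by
  induction h with
  | base a b x y h => simp [Ico_eq_empty_of_le (show b ≤ a + 1 by omega)]
  | step a b x y a2 b2 x2 y2 h _ ih =>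
    rw [ih, Int.sum_Ico_eq_add_sum_Ico_add_one (fun i ↦ i) (show a + 1 < b by omega)]
    ring

lemma s22.x_eq {a b x y a2 b2 x2 y2 : ℤ} (h : s22 a b x y a2 b2 x2 y2) :
    x2 = x + ∑ i ∈ Ico a b, i := by
  rcases h with ⟨hab, -, -, rfl, -⟩ | ⟨hab, hloop⟩
  · simp [Ico_eq_empty_of_le hab]
  · rw [hloop.x_eq, Int.sum_Ico_eq_add_sum_Ico_add_one (fun i ↦ i) (show a < b by omega)]
    ring

lemma s11_x_eq {a b x y x1 y1 : ℤ} (h : s11 a b x y x1 y1) : x1 = x + ∑ i ∈ Ico a b, i := by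
  obtain ⟨_, _, h⟩ := h
  exact h.x_eq

lemma s21_x_eq {a b x y x2 y2 : ℤ} (h : s21 a b x y x2 y2) : x2 = x + ∑ i ∈ Ico a b, i := by
  obtain ⟨_, _, h⟩ := h
  exact h.x_eq

/-- Clause F1 is satisfiable together with the CHC encoding of P1 and P2. -/
theorem F1_satisfiable (a b x y x1 y1 x2 y2 : ℤ)
    (h1 : s11 a b x y x1 y1) (h2 : s21 a b x y x2 y2) : ¬ (x1 ≤ x2 - 1) := by
  have hx : x1 = x2 := (s11_x_eq h1).trans (s21_x_eq h2).symm
  omega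
end

section
/- Projection for the Octagons domain: for every n ≥ 1 and every octagon P in ℝ^(n+1), the image of P under the projection π : (Fin (n+1) → ℝ) → (Fin n → ℝ) that forgets the last coordinate (π x = x ∘ Fin.castSucc) is an octagon in ℝ^n. -/
/-- An octagonal functional on `ℝ^n`: `x ↦ ε₁ * x i + ε₂ * x j` with
`ε₁, ε₂ ∈ {-1, 0, 1}`. -/
def IsOctagonalFunctional {n : ℕ} (f : (Fin n → ℝ) → ℝ) : Prop :=
  ∃ (i j : Fin n) (ε₁ ε₂ : ℝ), ε₁ ∈ ({-1, 0, 1} : Set ℝ) ∧ ε₂ ∈ ({-1, 0, 1} : Set ℝ) ∧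
    ∀ x, f x = ε₁ * x i + ε₂ * x j

/-- An octagon in `ℝ^n` is a finite intersection of sets `{x | f k x ≤ b k}`
where each `f k` is an octagonal functional. -/
def IsOctagon {n : ℕ} (P : Set (Fin n → ℝ)) : Prop :=
  ∃ (K : Type) (_ : Fintype K) (f : K → (Fin n → ℝ) → ℝ) (b : K → ℝ),
    (∀ k, IsOctagonalFunctional (f k)) ∧ P = ⋂ k : K, {x : Fin n → ℝ | f k x ≤ b k}

/-!
Fourier–Motzkin elimination of the last coordinate. Writing `x = Fin.snoc y t`, every octagonal
constraint becomes `g y + s * t ≤ b'` with `s ∈ {-1, 0, 1}`, where `g` involves at most one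
coordinate of `y` as soon as `s ≠ 0` (a constraint `±2 t ≤ b` is halved). Eliminating `t` keeps
the constraints with `s = 0` and adds the sum of each pair with `s = 1` and `s = -1`; such a sum
is again octagonal because each summand is a single signed coordinate.
-/

theorem exists_between_of_finite {α I J : Type*} [ConditionallyCompleteLattice α]
    [Finite I] [Finite J] {l : J → α} {u : I → α} (h : ∀ j i, l j ≤ u i) :
    ∃ t, (∀ j, l j ≤ t) ∧ ∀ i, t ≤ u i := by
  cases isEmpty_or_nonempty I with
  | inl _ => exact ⟨⨆ j, l j, le_ciSup (Finite.bddAbove_range l), isEmptyElim⟩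
  | inr _ => exact ⟨⨅ i, u i, fun j => le_ciInf (h j), ciInf_le (Finite.bddBelow_range u)⟩

theorem exists_forall_add_mul_le_iff {K : Type*} [Finite K] {a s b : K → ℝ}
    (hs : ∀ k, s k ∈ ({-1, 0, 1} : Set ℝ)) :
    (∃ t, ∀ k, a k + s k * t ≤ b k) ↔
      (∀ k, s k = 0 → a k ≤ b k) ∧ ∀ k l, s k = 1 → s l = -1 → a k + a l ≤ b k + b l := by
  constructor
  · rintro ⟨t, ht⟩
    refine ⟨fun k hk => by simpa [hk] using ht k, fun k l hk hl => ?_⟩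
    have hk' := ht k
    have hl' := ht l
    rw [hk, one_mul] at hk'
    rw [hl, neg_one_mul] at hl'
    linarith
  · rintro ⟨hzero, hpair⟩
    obtain ⟨t, hlow, hup⟩ := exists_between_of_finite
      (l := fun l : {l // s l = -1} => a l - b l) (u := fun k : {k // s k = 1} => b k - a k)
      fun l k => by linarith [hpair k l k.2 l.2]
    refine ⟨t, fun k => ?_⟩
    rcases hs k with h | h | h
    · linarith [hlow ⟨k, h⟩, h ▸ neg_one_mul t]
    · simpa [h] using hzero k h
    · linarith [hup ⟨k, h⟩, h ▸ one_mul t]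

def IsSignedCoordinate {n : ℕ} (g : (Fin n → ℝ) → ℝ) : Prop :=
  ∃ (m : Fin n) (ε : ℝ), ε ∈ ({-1, 0, 1} : Set ℝ) ∧ ∀ y, g y = ε * y m

theorem isSignedCoordinate_zero {n : ℕ} [NeZero n] :
    IsSignedCoordinate (fun _ : Fin n → ℝ => 0) :=
  ⟨0, 0, by simp, fun y => by simp⟩

theorem IsSignedCoordinate.add {n : ℕ} {g h : (Fin n → ℝ) → ℝ} (hg : IsSignedCoordinate g)
    (hh : IsSignedCoordinate h) : IsOctagonalFunctional (fun y => g y + h y) := by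
  obtain ⟨m, ε, hε, hg⟩ := hg
  obtain ⟨m', ε', hε', hh⟩ := hh
  exact ⟨m, m', ε, ε', hε, hε', fun y => by simp only [hg, hh]⟩

theorem IsSignedCoordinate.isOctagonalFunctional {n : ℕ} {g : (Fin n → ℝ) → ℝ}
    (hg : IsSignedCoordinate g) : IsOctagonalFunctional g := by
  obtain ⟨m, ε, hε, hg⟩ := hg
  exact ⟨m, m, ε, 0, hε, by simp, fun y => by simp [hg]⟩

theorem exists_sign_mul_le_iff (c b : ℝ) :
    ∃ s b' : ℝ, s ∈ ({-1, 0, 1} : Set ℝ) ∧ ∀ t, c * t ≤ b ↔ s * t ≤ b' := by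
  rcases lt_trichotomy c 0 with hc | rfl | hc
  · refine ⟨-1, b / -c, by simp, fun t => ?_⟩
    rw [le_div_iff₀ (neg_pos.mpr hc)]
    constructor <;> intro h <;> linarith
  · exact ⟨0, b, by simp, fun t => Iff.rfl⟩
  · refine ⟨1, b / c, by simp, fun t => ?_⟩
    rw [le_div_iff₀ hc]
    constructor <;> intro h <;> linarith

theorem IsOctagonalFunctional.exists_snoc_le_iff {n : ℕ} [NeZero n]
    {f : (Fin (n + 1) → ℝ) → ℝ} (hf : IsOctagonalFunctional f) (b : ℝ) :
    ∃ (g : (Fin n → ℝ) → ℝ) (s b' : ℝ), s ∈ ({-1, 0, 1} : Set ℝ) ∧ IsOctagonalFunctional g ∧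
      (s ≠ 0 → IsSignedCoordinate g) ∧
      ∀ y t, f (Fin.snoc y t) ≤ b ↔ g y + s * t ≤ b' := by
  obtain ⟨i, j, ε₁, ε₂, hε₁, hε₂, hf⟩ := hf
  simp only [hf]
  induction i using Fin.lastCases with
  | last =>
    induction j using Fin.lastCases with
    | last =>
      obtain ⟨s, b', hs, hiff⟩ := exists_sign_mul_le_iff (ε₁ + ε₂) b
      refine ⟨fun _ => 0, s, b', hs, isSignedCoordinate_zero.isOctagonalFunctional,
        fun _ => isSignedCoordinate_zero, fun y t => ?_⟩
      simpa [add_mul] using hiff t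
    | cast j =>
      have hg : IsSignedCoordinate fun y => ε₂ * y j := ⟨j, ε₂, hε₂, fun y => rfl⟩
      exact ⟨_, ε₁, b, hε₁, hg.isOctagonalFunctional, fun _ => hg, fun y t => by simp [add_comm]⟩
  | cast i =>
    induction j using Fin.lastCases with
    | last =>
      have hg : IsSignedCoordinate fun y => ε₁ * y i := ⟨i, ε₁, hε₁, fun y => rfl⟩
      exact ⟨_, ε₂, b, hε₂, hg.isOctagonalFunctional, fun _ => hg, fun y t => by simp⟩
    | cast j =>
      exact ⟨fun y => ε₁ * y i + ε₂ * y j, 0, b, by simp, ⟨i, j, ε₁, ε₂, hε₁, hε₂, fun y => rfl⟩,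
        fun h => (h rfl).elim, fun y t => by simp⟩

theorem image_comp_castSucc_eq {n : ℕ} {α : Type*} (P : Set (Fin (n + 1) → α)) :
    (fun x : Fin (n + 1) → α => x ∘ Fin.castSucc) '' P = {y | ∃ t, Fin.snoc y t ∈ P} := by
  ext y
  constructor
  · rintro ⟨x, hx, rfl⟩
    exact ⟨x (Fin.last n), (Fin.snoc_init_self x).symm ▸ hx⟩
  · rintro ⟨t, ht⟩
    exact ⟨_, ht, Fin.init_snoc (α := fun _ => α) t y⟩

/-- Projection for the Octagons domain: for `n ≥ 1`, the image of an octagon in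
`ℝ^(n+1)` under the projection forgetting the last coordinate is an octagon in `ℝ^n`. -/
theorem octagon_projection (n : ℕ) (hn : 1 ≤ n) (P : Set (Fin (n + 1) → ℝ))
    (hP : IsOctagon P) :
    IsOctagon ((fun x : Fin (n + 1) → ℝ => x ∘ Fin.castSucc) '' P) := by
  classical
  have : NeZero n := ⟨by omega⟩
  obtain ⟨K, _, f, b, hf, rfl⟩ := hP
  choose g s b' hs hg hsg hiff using fun k => (hf k).exists_snoc_le_iff (b k)
  refine ⟨{k // s k = 0} ⊕ {p : K × K // s p.1 = 1 ∧ s p.2 = -1}, inferInstance,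
    Sum.elim (fun k => g k) (fun p y => g p.1.1 y + g p.1.2 y),
    Sum.elim (fun k => b' k) (fun p => b' p.1.1 + b' p.1.2), ?_, ?_⟩
  · rintro (k | ⟨⟨k, l⟩, hk, hl⟩)
    · exact hg k
    · exact (hsg k (by simp [hk])).add (hsg l (by simp [hl]))
  · ext y
    simp only [image_comp_castSucc_eq, Set.mem_ofPred_eq, Set.mem_iInter, hiff,
      exists_forall_add_mul_le_iff hs, Sum.forall, Sum.elim_inl, Sum.elim_inr, Subtype.forall,
      Prod.forall, and_imp]
end

section
/- Projection for the Bounded Differences domain: for every n ≥ 1 and every bounded-difference set P in ℝ^(n+1), the image of P under the projection π : (Fin (n+1) → ℝ) → (Fin n → ℝ) that forgets the last coordinate (π x = x ∘ Fin.castSucc) is a bounded-difference set in ℝ^n. -/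
/-- A bounded-difference functional on `ℝ^n`: `x ↦ ε₁ * x i + ε₂ * x j` with
`ε₁, ε₂ ∈ {-1, 0, 1}` and `ε₁ ≠ ε₂`. -/
def IsBDFunctional {n : ℕ} (f : (Fin n → ℝ) → ℝ) : Prop :=
  ∃ (i j : Fin n) (ε₁ ε₂ : ℝ), ε₁ ∈ ({-1, 0, 1} : Set ℝ) ∧ ε₂ ∈ ({-1, 0, 1} : Set ℝ) ∧
    ε₁ ≠ ε₂ ∧ ∀ x, f x = ε₁ * x i + ε₂ * x j

/-- A bounded-difference set in `ℝ^n` is a finite intersection of sets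
`{x | f k x ≤ b k}` where each `f k` is a bounded-difference functional. -/
def IsBDS {n : ℕ} (P : Set (Fin n → ℝ)) : Prop :=
  ∃ (K : Type) (_ : Fintype K) (f : K → (Fin n → ℝ) → ℝ) (b : K → ℝ),
    (∀ k, IsBDFunctional (f k)) ∧ P = ⋂ k : K, {x : Fin n → ℝ | f k x ≤ b k}

/-!
Write every bounded-difference constraint as `x p - x q ≤ b`, where each of `p`, `q` is a
coordinate or absent (an absent term is `0`). The last coordinate `t` then occurs with
coefficient `-1`, `0` or `1`, and Fourier–Motzkin elimination of `t` replaces the constraints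
involving it by the sums of an upper bound `t + a ≤ b` and a lower bound `-t + a' ≤ b'`.
In an upper bound `t` is the positive term, so `a` is at most one negative coordinate; dually
`a'` is at most one positive coordinate. Hence `a + a' ≤ b + b'` is again a difference
constraint in the remaining coordinates.
-/

theorem exists_forall_le_and_forall_le {α ι κ : Type*} [LinearOrder α] [Nonempty α]
    [Finite ι] [Finite κ] {f : ι → α} {g : κ → α} (h : ∀ i j, f i ≤ g j) :
    ∃ t, (∀ i, f i ≤ t) ∧ ∀ j, t ≤ g j := by
  cases isEmpty_or_nonempty κ with
  | inl _ =>
    obtain ⟨t, ht⟩ := (Set.finite_range f).bddAbove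
    exact ⟨t, fun i => ht ⟨i, rfl⟩, isEmptyElim⟩
  | inr _ =>
    obtain ⟨j₀, hj₀⟩ := Finite.exists_min g
    exact ⟨g j₀, fun i => h i j₀, hj₀⟩

/-- Fourier–Motzkin elimination of one real variable with coefficients in `{-1, 0, 1}`. -/
theorem exists_sign_mul_add_le_iff {K : Type*} [Finite K] {c : K → ℝ} (a b : K → ℝ)
    (hc : ∀ k, c k = -1 ∨ c k = 0 ∨ c k = 1) :
    (∃ t, ∀ k, c k * t + a k ≤ b k) ↔
      (∀ k, c k = 0 → a k ≤ b k) ∧ ∀ k, c k = 1 → ∀ l, c l = -1 → a k + a l ≤ b k + b l := by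
  constructor
  · rintro ⟨t, ht⟩
    exact ⟨fun k hk => by simpa [hk] using ht k,
      fun k hk l hl => by linarith [hk ▸ ht k, hl ▸ ht l]⟩
  · rintro ⟨hfree, hpair⟩
    obtain ⟨t, hlower, hupper⟩ := exists_forall_le_and_forall_le
      (f := fun l : {l // c l = -1} => a l - b l) (g := fun k : {k // c k = 1} => b k - a k)
      fun l k => by linarith [hpair k k.2 l l.2]
    refine ⟨t, fun k => ?_⟩
    rcases hc k with hk | hk | hk <;> rw [hk]
    · linarith [hlower ⟨k, hk⟩]
    · simpa using hfree k hk
    · linarith [hupper ⟨k, hk⟩]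

theorem mem_image_comp_castSucc_iff {α : Type*} {n : ℕ} {S : Set (Fin (n + 1) → α)}
    {y : Fin n → α} : y ∈ (fun x => x ∘ Fin.castSucc) '' S ↔ ∃ t, Fin.snoc y t ∈ S := by
  constructor
  · rintro ⟨x, hx, rfl⟩
    exact ⟨x (Fin.last n), by rwa [← Fin.snoc_init_self x] at hx⟩
  · rintro ⟨t, ht⟩
    exact ⟨_, ht, Fin.snoc_comp_castSucc⟩

section DifferenceConstraints

variable {n : ℕ}

/-- `none` encodes an absent term of a bounded-difference functional. -/
def optCoord (p : Option (Fin n)) (x : Fin n → ℝ) : ℝ :=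
  p.elim 0 x

def diffPolyhedron {K : Type} (p q : K → Option (Fin n)) (b : K → ℝ) : Set (Fin n → ℝ) :=
  ⋂ k, {x | optCoord (p k) x - optCoord (q k) x ≤ b k}

theorem IsBDFunctional.exists_optCoord_sub {f : (Fin n → ℝ) → ℝ} (hf : IsBDFunctional f) :
    ∃ p q : Option (Fin n), ∀ x, f x = optCoord p x - optCoord q x := by
  obtain ⟨i, j, ε₁, ε₂, hε₁, hε₂, hne, hf⟩ := hf
  simp only [Set.mem_insert_iff, Set.mem_singleton_iff] at hε₁ hε₂
  rcases hε₁ with rfl | rfl | rfl <;> rcases hε₂ with rfl | rfl | rfl <;> norm_num at hne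
  exacts [⟨none, some i, fun x => by simp [hf, optCoord]⟩,
    ⟨some j, some i, fun x => by simp [hf, optCoord]; ring⟩,
    ⟨none, some j, fun x => by simp [hf, optCoord]⟩,
    ⟨some j, none, fun x => by simp [hf, optCoord]⟩,
    ⟨some i, some j, fun x => by simp [hf, optCoord]; ring⟩,
    ⟨some i, none, fun x => by simp [hf, optCoord]⟩]

theorem isBDFunctional_optCoord_sub [NeZero n] (p q : Option (Fin n)) :
    IsBDFunctional fun x => optCoord p x - optCoord q x := by
  have h₁ : (1 : ℝ) ∈ ({-1, 0, 1} : Set ℝ) := by norm_num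
  have h₀ : (0 : ℝ) ∈ ({-1, 0, 1} : Set ℝ) := by norm_num
  have hm : (-1 : ℝ) ∈ ({-1, 0, 1} : Set ℝ) := by norm_num
  rcases p with _ | i <;> rcases q with _ | j
  · exact ⟨0, 0, 1, -1, h₁, hm, by norm_num, fun x => by simp [optCoord]⟩
  · exact ⟨j, j, -1, 0, hm, h₀, by norm_num, fun x => by simp [optCoord]⟩
  · exact ⟨i, i, 1, 0, h₁, h₀, by norm_num, fun x => by simp [optCoord]⟩
  · exact ⟨i, j, 1, -1, h₁, hm, by norm_num, fun x => by simp [optCoord]; ring⟩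

theorem IsBDS.exists_diffPolyhedron_eq {P : Set (Fin n → ℝ)} (hP : IsBDS P) :
    ∃ (K : Type) (_ : Finite K) (p q : K → Option (Fin n)) (b : K → ℝ),
      P = diffPolyhedron p q b := by
  obtain ⟨K, _, f, b, hf, rfl⟩ := hP
  choose p q hpq using fun k => (hf k).exists_optCoord_sub
  exact ⟨K, inferInstance, p, q, b, by simp only [diffPolyhedron, hpq]⟩

theorem isBDS_diffPolyhedron [NeZero n] {K : Type} [Finite K] (p q : K → Option (Fin n))
    (b : K → ℝ) : IsBDS (diffPolyhedron p q b) :=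
  ⟨K, Fintype.ofFinite K, fun k x => optCoord (p k) x - optCoord (q k) x, b,
    fun k => isBDFunctional_optCoord_sub (p k) (q k), rfl⟩

def lastCoeff (p : Option (Fin (n + 1))) : ℝ :=
  if p = some (Fin.last n) then 1 else 0

def dropLast (p : Option (Fin (n + 1))) : Option (Fin n) :=
  p.bind (Fin.lastCases none some)

theorem optCoord_snoc (p : Option (Fin (n + 1))) (y : Fin n → ℝ) (t : ℝ) :
    optCoord p (Fin.snoc y t) = lastCoeff p * t + optCoord (dropLast p) y := by
  rcases p with _ | i
  · simp [optCoord, lastCoeff, dropLast]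
  · induction i using Fin.lastCases <;> simp [optCoord, lastCoeff, dropLast]

theorem lastCoeff_sub_lastCoeff_mem (p q : Option (Fin (n + 1))) :
    lastCoeff p - lastCoeff q = -1 ∨ lastCoeff p - lastCoeff q = 0 ∨
      lastCoeff p - lastCoeff q = 1 := by
  unfold lastCoeff
  split_ifs <;> norm_num

theorem dropLast_eq_none_of_lastCoeff_sub_eq_one {p q : Option (Fin (n + 1))}
    (h : lastCoeff p - lastCoeff q = 1) : dropLast p = none := by
  unfold lastCoeff at h
  split_ifs at h with hp <;> norm_num at h
  simp [hp, dropLast]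

theorem mem_image_comp_castSucc_diffPolyhedron_iff {K : Type} (p q : K → Option (Fin (n + 1)))
    (b : K → ℝ) (y : Fin n → ℝ) :
    y ∈ (fun x => x ∘ Fin.castSucc) '' diffPolyhedron p q b ↔
      ∃ t, ∀ k, (lastCoeff (p k) - lastCoeff (q k)) * t +
        (optCoord (dropLast (p k)) y - optCoord (dropLast (q k)) y) ≤ b k := by
  have hsplit : ∀ k t, optCoord (p k) (Fin.snoc y t) - optCoord (q k) (Fin.snoc y t) =
      (lastCoeff (p k) - lastCoeff (q k)) * t +
        (optCoord (dropLast (p k)) y - optCoord (dropLast (q k)) y) := by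
    intro k t
    rw [optCoord_snoc, optCoord_snoc]
    ring
  simp only [mem_image_comp_castSucc_iff, diffPolyhedron, Set.mem_iInter, Set.mem_ofPred_eq,
    hsplit]

theorem exists_diffPolyhedron_eq_image_comp_castSucc {K : Type} [Finite K]
    (p q : K → Option (Fin (n + 1))) (b : K → ℝ) :
    ∃ (J : Type) (_ : Finite J) (p' q' : J → Option (Fin n)) (b' : J → ℝ),
      (fun x => x ∘ Fin.castSucc) '' diffPolyhedron p q b = diffPolyhedron p' q' b' := by
  set c := fun k => lastCoeff (p k) - lastCoeff (q k) with hc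
  refine ⟨{k // c k = 0} ⊕ {k // c k = 1} × {l // c l = -1}, inferInstance,
    Sum.elim (fun k => dropLast (p k)) (fun kl => dropLast (p kl.2)),
    Sum.elim (fun k => dropLast (q k)) (fun kl => dropLast (q kl.1)),
    Sum.elim (fun k => b k) (fun kl => b kl.1 + b kl.2), ?_⟩
  ext y
  rw [mem_image_comp_castSucc_diffPolyhedron_iff,
    exists_sign_mul_add_le_iff _ _ fun k => lastCoeff_sub_lastCoeff_mem (p k) (q k)]
  simp only [diffPolyhedron, Set.mem_iInter, Set.mem_ofPred_eq, Sum.forall, Sum.elim_inl,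
    Sum.elim_inr, Prod.forall, Subtype.forall, hc]
  refine and_congr Iff.rfl (forall₂_congr fun k hk => forall₂_congr fun l hl => ?_)
  have hpk : dropLast (p k) = none := dropLast_eq_none_of_lastCoeff_sub_eq_one hk
  have hql : dropLast (q l) = none :=
    dropLast_eq_none_of_lastCoeff_sub_eq_one (q := p l) (by linarith)
  simp only [hpk, hql, optCoord, Option.elim_none]
  constructor <;> intro h <;> linarith

end DifferenceConstraints

/-- Projection for the Bounded Differences domain: for `n ≥ 1`, the image of a
bounded-difference set in `ℝ^(n+1)` under the projection forgetting the last
coordinate is a bounded-difference set in `ℝ^n`. -/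
theorem bds_projection (n : ℕ) (hn : 1 ≤ n) (P : Set (Fin (n + 1) → ℝ))
    (hP : IsBDS P) :
    IsBDS ((fun x : Fin (n + 1) → ℝ => x ∘ Fin.castSucc) '' P) := by
  have : NeZero n := NeZero.of_pos hn
  obtain ⟨K, _, p, q, b, rfl⟩ := hP.exists_diffPolyhedron_eq
  obtain ⟨J, _, p', q', b', hproj⟩ := exists_diffPolyhedron_eq_image_comp_castSucc p q b
  rw [hproj]
  exact isBDS_diffPolyhedron p' q' b'
end
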